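/- Let G have a unique maximum open packing U, and let x ∉ U be a vertex with a neighbor y ∈ U. Let G' be obtained from G by appending a path P₃ to x (adding a new path a-b-c and the edge xa). Then G' has a unique maximum open packing, namely U ∪ {b, c}, and ρ°(G') = ρ°(G) + 2. -/
import Mathlib


variable {V : Type*}

/-- A set of vertices is an open packing if the open neighborhoods of distinct
vertices in it are pairwise disjoint. -/
def IsOpenPacking (G : SimpleGraph V) (S : Set V) : Prop :=
  S.Pairwise fun u v => Disjoint (G.neighborSet u) (G.neighborSet v)

/-- The open packing number: the maximum cardinality of an open packing. -/
noncomputable def openPackingNumber (G : SimpleGraph V) : ℕ :=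
  sSup {n | ∃ S : Finset V, IsOpenPacking G ↑S ∧ S.card = n}

/-- `U` is the unique maximum open packing of `G`. -/
def HasUniqueMaxOpenPacking (G : SimpleGraph V) (U : Finset V) : Prop :=
  IsOpenPacking G ↑U ∧ U.card = openPackingNumber G ∧
    ∀ S : Finset V, IsOpenPacking G ↑S → S.card = openPackingNumber G → S = U

/-- The graph obtained from `G` by appending a path on `n` new vertices to the
vertex `x` (`x` is joined to the first vertex of a new path `0-1-⋯-(n-1)`). -/
def appendPath (G : SimpleGraph V) (x : V) (n : ℕ) : SimpleGraph (V ⊕ Fin n) :=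
  SimpleGraph.fromRel fun a b => match a, b with
    | Sum.inl u, Sum.inl v => G.Adj u v
    | Sum.inl u, Sum.inr i => u = x ∧ (i : ℕ) = 0
    | Sum.inr i, Sum.inr j => (j : ℕ) = (i : ℕ) + 1
    | _, _ => False

lemma adj_inl_inl (G : SimpleGraph V) (x u v : V) :
    (appendPath G x 3).Adj (Sum.inl u) (Sum.inl v) ↔ G.Adj u v := by
  simp only [appendPath, SimpleGraph.fromRel_adj, ne_eq, Sum.inl.injEq]
  constructor
  · rintro ⟨h, h1 | h1⟩
    · exact h1
    · exact h1.symm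
  · intro h; exact ⟨h.ne, Or.inl h⟩

lemma adj_inl_inr (G : SimpleGraph V) (x u : V) (i : Fin 3) :
    (appendPath G x 3).Adj (Sum.inl u) (Sum.inr i) ↔ u = x ∧ (i : ℕ) = 0 := by
  simp [appendPath, SimpleGraph.fromRel_adj]

lemma adj_inr_inl (G : SimpleGraph V) (x u : V) (i : Fin 3) :
    (appendPath G x 3).Adj (Sum.inr i) (Sum.inl u) ↔ u = x ∧ (i : ℕ) = 0 := by
  rw [SimpleGraph.adj_comm]; exact adj_inl_inr G x u i

lemma adj_inr_inr (G : SimpleGraph V) (x : V) (i j : Fin 3) :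
    (appendPath G x 3).Adj (Sum.inr i) (Sum.inr j) ↔
      ((j : ℕ) = (i : ℕ) + 1 ∨ (i : ℕ) = (j : ℕ) + 1) := by
  simp only [appendPath, SimpleGraph.fromRel_adj, ne_eq, Sum.inr.injEq]
  constructor
  · rintro ⟨_, h⟩; exact h
  · intro h; refine ⟨fun hij => ?_, h⟩
    subst hij; omega

lemma adj_inl_iff (G : SimpleGraph V) (x u : V) (t : V ⊕ Fin 3) :
    (appendPath G x 3).Adj (Sum.inl u) t ↔
      (∃ s, t = Sum.inl s ∧ G.Adj u s) ∨ (u = x ∧ t = Sum.inr 0) := by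
  cases t with
  | inl s => simp [adj_inl_inl]
  | inr k =>
    rw [adj_inl_inr]
    constructor
    · rintro ⟨rfl, hk⟩
      exact Or.inr ⟨rfl, by rw [show k = 0 from Fin.ext hk]⟩
    · rintro (⟨s, hs, _⟩ | ⟨rfl, hk⟩)
      · exact absurd hs (by simp)
      · exact ⟨rfl, by rw [Sum.inr.injEq] at hk; subst hk; rfl⟩

lemma adj_a_iff (G : SimpleGraph V) (x : V) (t : V ⊕ Fin 3) :
    (appendPath G x 3).Adj (Sum.inr 0) t ↔ t = Sum.inl x ∨ t = Sum.inr 1 := by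
  cases t with
  | inl s => rw [adj_inr_inl]; simp [eq_comm]
  | inr k =>
    rw [adj_inr_inr]
    fin_cases k <;> simp

lemma adj_b_iff (G : SimpleGraph V) (x : V) (t : V ⊕ Fin 3) :
    (appendPath G x 3).Adj (Sum.inr 1) t ↔ t = Sum.inr 0 ∨ t = Sum.inr 2 := by
  cases t with
  | inl s => rw [adj_inr_inl]; simp
  | inr k =>
    rw [adj_inr_inr]
    fin_cases k <;> simp

lemma adj_c_iff (G : SimpleGraph V) (x : V) (t : V ⊕ Fin 3) :
    (appendPath G x 3).Adj (Sum.inr 2) t ↔ t = Sum.inr 1 := by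
  cases t with
  | inl s => rw [adj_inr_inl]; simp
  | inr k =>
    rw [adj_inr_inr]
    fin_cases k <;> simp

section opn
variable {W : Type*} [Fintype W]

omit [Fintype W] in
lemma empty_isOpenPacking (H : SimpleGraph W) : IsOpenPacking H ↑(∅ : Finset W) := by
  simp [IsOpenPacking]

lemma opn_bddAbove (H : SimpleGraph W) :
    BddAbove {n | ∃ S : Finset W, IsOpenPacking H ↑S ∧ S.card = n} :=
  ⟨Fintype.card W, fun _ ⟨S, _, hc⟩ => hc ▸ S.card_le_univ⟩

lemma card_le_opn {H : SimpleGraph W} {S : Finset W}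
    (h : IsOpenPacking H ↑S) : S.card ≤ openPackingNumber H :=
  le_csSup (opn_bddAbove H) ⟨S, h, rfl⟩

lemma opn_le {H : SimpleGraph W} {m : ℕ}
    (h : ∀ S : Finset W, IsOpenPacking H ↑S → S.card ≤ m) :
    openPackingNumber H ≤ m :=
  csSup_le ⟨0, ∅, empty_isOpenPacking H, Finset.card_empty⟩
    (fun _ ⟨S, hS, hc⟩ => hc ▸ h S hS)
end opn

lemma packing_in_G [Fintype V] [DecidableEq V] (G : SimpleGraph V) (x : V)
    {S : Finset (V ⊕ Fin 3)} (hS : IsOpenPacking (appendPath G x 3) ↑S) :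
    IsOpenPacking G ↑(Finset.univ.filter fun u => Sum.inl u ∈ S) := by
  intro u hu v hv huv
  rw [Set.disjoint_left]
  intro t htu htv
  simp only [Finset.coe_filter, Set.mem_setOf_eq, Finset.mem_univ, true_and] at hu hv
  have hd := hS (Finset.mem_coe.mpr hu) (Finset.mem_coe.mpr hv)
    (by simpa using huv)
  exact Set.disjoint_left.mp hd
    (show (appendPath G x 3).Adj (Sum.inl u) (Sum.inl t) from (adj_inl_inl G x u t).mpr htu)
    (show (appendPath G x 3).Adj (Sum.inl v) (Sum.inl t) from (adj_inl_inl G x v t).mpr htv)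

lemma packing_decomp [Fintype V] [DecidableEq V] (S : Finset (V ⊕ Fin 3)) :
    S = (Finset.univ.filter fun u => Sum.inl u ∈ S).image Sum.inl ∪
        (S ∩ {Sum.inr 0, Sum.inr 1, Sum.inr 2}) := by
  ext z
  cases z with
  | inl u => simp
  | inr k => fin_cases k <;> simp

theorem stmt_5 [Fintype V] [DecidableEq V] (G : SimpleGraph V)
    (U : Finset V) (hU : HasUniqueMaxOpenPacking G U)
    (x y : V) (hx : x ∉ U) (hy : y ∈ U) (hxy : G.Adj x y) :
    HasUniqueMaxOpenPacking (appendPath G x 3)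
      (U.image Sum.inl ∪ {Sum.inr 1, Sum.inr 2}) ∧
    openPackingNumber (appendPath G x 3) = openPackingNumber G + 2 := by
  classical
  obtain ⟨hUop, hUcard, hUuniq⟩ := hU
  set S' : Finset (V ⊕ Fin 3) := U.image Sum.inl ∪ {Sum.inr 1, Sum.inr 2} with hS'def
  -- cardinality of S'
  have hbc : (Sum.inr 1 : V ⊕ Fin 3) ≠ Sum.inr 2 := by simp
  have hdisjS' : Disjoint (U.image Sum.inl) ({Sum.inr 1, Sum.inr 2} : Finset (V ⊕ Fin 3)) := by
    simp [Finset.disjoint_left]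
  have hcardS' : S'.card = U.card + 2 := by
    rw [hS'def, Finset.card_union_of_disjoint hdisjS',
      Finset.card_image_of_injective _ Sum.inl_injective, Finset.card_pair hbc]
  -- S' is an open packing
  have hS'op : IsOpenPacking (appendPath G x 3) ↑S' := by
    have h1 : ∀ u ∈ U, ∀ v ∈ U, u ≠ v →
        Disjoint ((appendPath G x 3).neighborSet (Sum.inl u))
          ((appendPath G x 3).neighborSet (Sum.inl v)) := by
      intro u hu v hv huv
      rw [Set.disjoint_left]
      intro t htu htv
      rw [SimpleGraph.mem_neighborSet, adj_inl_iff] at htu htv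
      rcases htu with ⟨s, rfl, hus⟩ | ⟨rfl, rfl⟩
      · rcases htv with ⟨s', hs', hvs⟩ | ⟨rfl, hs'⟩
        · rw [Sum.inl.injEq] at hs'; subst hs'
          exact Set.disjoint_left.mp (hUop (Finset.mem_coe.mpr hu)
            (Finset.mem_coe.mpr hv) huv) hus hvs
        · exact absurd hs' (by simp)
      · exact hx hu
    have h2 : ∀ u ∈ U,
        Disjoint ((appendPath G x 3).neighborSet (Sum.inl u))
          ((appendPath G x 3).neighborSet (Sum.inr 1)) := by
      intro u hu
      rw [Set.disjoint_left]
      intro t htu htb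
      rw [SimpleGraph.mem_neighborSet, adj_inl_iff] at htu
      rw [SimpleGraph.mem_neighborSet, adj_b_iff] at htb
      rcases htu with ⟨s, rfl, _⟩ | ⟨rfl, rfl⟩
      · rcases htb with h | h <;> exact absurd h (by simp)
      · exact hx hu
    have h3 : ∀ u ∈ U,
        Disjoint ((appendPath G x 3).neighborSet (Sum.inl u))
          ((appendPath G x 3).neighborSet (Sum.inr 2)) := by
      intro u hu
      rw [Set.disjoint_left]
      intro t htu htc
      rw [SimpleGraph.mem_neighborSet, adj_inl_iff] at htu
      rw [SimpleGraph.mem_neighborSet, adj_c_iff] at htc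
      subst htc
      rcases htu with ⟨s, hs, _⟩ | ⟨_, hs⟩ <;> exact absurd hs (by simp)
    have h4 : Disjoint ((appendPath G x 3).neighborSet (Sum.inr 1))
        ((appendPath G x 3).neighborSet (Sum.inr 2)) := by
      rw [Set.disjoint_left]
      intro t htb htc
      rw [SimpleGraph.mem_neighborSet, adj_b_iff] at htb
      rw [SimpleGraph.mem_neighborSet, adj_c_iff] at htc
      subst htc
      rcases htb with h | h <;> exact absurd h (by simp)
    intro z hz w hw hzw
    have hz' : z ∈ S' := hz
    have hw' : w ∈ S' := hw
    rw [hS'def, Finset.mem_union, Finset.mem_image] at hz' hw'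
    simp only [Finset.mem_insert, Finset.mem_singleton] at hz' hw'
    rcases hz' with ⟨u, hu, rfl⟩ | rfl | rfl <;>
      rcases hw' with ⟨v, hv, rfl⟩ | rfl | rfl
    · exact h1 u hu v hv (fun h => hzw (by rw [h]))
    · exact h2 u hu
    · exact h3 u hu
    · exact (h2 v hv).symm
    · exact absurd rfl hzw
    · exact h4
    · exact (h3 v hv).symm
    · exact h4.symm
    · exact absurd rfl hzw
  -- key bound and uniqueness for arbitrary packings
  have key : ∀ S : Finset (V ⊕ Fin 3), IsOpenPacking (appendPath G x 3) ↑S →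
      S.card ≤ U.card + 2 ∧ (S.card = U.card + 2 → S = S') := by
    intro S hS
    set S₀ : Finset V := Finset.univ.filter (fun u => Sum.inl u ∈ S) with hS₀def
    set T : Finset (V ⊕ Fin 3) := S ∩ {Sum.inr 0, Sum.inr 1, Sum.inr 2} with hTdef
    have hdecomp : S = S₀.image Sum.inl ∪ T := packing_decomp S
    have hdisj : Disjoint (S₀.image Sum.inl) T := by
      rw [Finset.disjoint_left]
      rintro z hz hzT
      rw [Finset.mem_image] at hz
      obtain ⟨u, _, rfl⟩ := hz
      rw [hTdef, Finset.mem_inter] at hzT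
      simp at hzT
    have hcard : S.card = S₀.card + T.card := by
      have : S.card = (S₀.image Sum.inl ∪ T).card := by rw [← hdecomp]
      rw [this, Finset.card_union_of_disjoint hdisj,
        Finset.card_image_of_injective _ Sum.inl_injective]
    have hS₀op : IsOpenPacking G ↑S₀ := packing_in_G G x hS
    have hS₀le : S₀.card ≤ U.card := hUcard ▸ card_le_opn hS₀op
    have hac : ¬((Sum.inr 0 : V ⊕ Fin 3) ∈ S ∧ (Sum.inr 2 : V ⊕ Fin 3) ∈ S) := by
      rintro ⟨h0, h2⟩
      have hd := hS (Finset.mem_coe.mpr h0) (Finset.mem_coe.mpr h2) (by simp)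
      exact Set.disjoint_left.mp hd
        (show (appendPath G x 3).Adj (Sum.inr 0) (Sum.inr 1) from
          (adj_a_iff G x _).mpr (Or.inr rfl))
        (show (appendPath G x 3).Adj (Sum.inr 2) (Sum.inr 1) from
          (adj_c_iff G x _).mpr rfl)
    have hTsub : T ⊆ {Sum.inr 0, Sum.inr 1, Sum.inr 2} := Finset.inter_subset_right
    have hT2 : T.card ≤ 2 := by
      by_contra h
      push_neg at h
      have h3 : ({Sum.inr 0, Sum.inr 1, Sum.inr 2} : Finset (V ⊕ Fin 3)).card = 3 := by
        rw [Finset.card_insert_of_notMem (by simp), Finset.card_insert_of_notMem (by simp),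
          Finset.card_singleton]
      have hTeq : T = {Sum.inr 0, Sum.inr 1, Sum.inr 2} :=
        Finset.eq_of_subset_of_card_le hTsub (by omega)
      have h0T : (Sum.inr 0 : V ⊕ Fin 3) ∈ T := by rw [hTeq]; simp
      have h2T : (Sum.inr 2 : V ⊕ Fin 3) ∈ T := by rw [hTeq]; simp
      exact hac ⟨Finset.inter_subset_left h0T, Finset.inter_subset_left h2T⟩
    refine ⟨by omega, ?_⟩
    intro hSeq
    have hS₀eq : S₀ = U := by
      apply hUuniq S₀ hS₀op
      rw [← hUcard]; omega
    have hTeq2 : T.card = 2 := by omega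
    have hyS : (Sum.inl y : V ⊕ Fin 3) ∈ S := by
      have : y ∈ S₀ := hS₀eq ▸ hy
      rw [hS₀def, Finset.mem_filter] at this
      exact this.2
    have haS : (Sum.inr 0 : V ⊕ Fin 3) ∉ S := by
      intro h0
      have hd := hS (Finset.mem_coe.mpr h0) (Finset.mem_coe.mpr hyS) (by simp)
      exact Set.disjoint_left.mp hd
        (show (appendPath G x 3).Adj (Sum.inr 0) (Sum.inl x) from
          (adj_a_iff G x _).mpr (Or.inl rfl))
        (show (appendPath G x 3).Adj (Sum.inl y) (Sum.inl x) from
          (adj_inl_inl G x y x).mpr hxy.symm)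
    have hTsub2 : T ⊆ {Sum.inr 1, Sum.inr 2} := by
      intro t ht
      have ht1 := hTsub ht
      have ht2 : t ∈ S := Finset.inter_subset_left ht
      simp only [Finset.mem_insert, Finset.mem_singleton] at ht1 ⊢
      rcases ht1 with rfl | h
      · exact absurd ht2 haS
      · exact h
    have hTfin : T = {Sum.inr 1, Sum.inr 2} :=
      Finset.eq_of_subset_of_card_le hTsub2 (by rw [Finset.card_pair hbc]; omega)
    rw [hdecomp, hS₀eq, hTfin, hS'def]
  -- conclude
  have hge : U.card + 2 ≤ openPackingNumber (appendPath G x 3) :=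
    hcardS' ▸ card_le_opn hS'op
  have hle : openPackingNumber (appendPath G x 3) ≤ U.card + 2 :=
    opn_le (fun S hS => (key S hS).1)
  have hopn' : openPackingNumber (appendPath G x 3) = U.card + 2 := le_antisymm hle hge
  refine ⟨⟨hS'op, hcardS'.trans hopn'.symm, fun S hS1 hS2 => (key S hS1).2 (hS2.trans hopn')⟩, ?_⟩
  rw [hopn', hUcard]
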